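/- Let 0 < t < 2 be real, set z := t/√(1 − t/2), m := (2z)^{−1/2}, Λ := m⁻³, u₃ := −m²·(2t − t²/4) − (3/8)mΛ, and 𝚡² := z(2−t)²/((2+t)²·t·(4−t)). Then 1/(48·m²·𝚡²) − (u₃ + Λ²/64)/(6m²) − 3Λ/(16m) = (1/2)·t·(1 − t/2). -/

import Mathlib

/-!
With `w = 1/m² = 2z` one has `Λ/m = w²` and `Λ²/m² = w⁴`, so the left-hand side is a polynomial
in `w` plus `w/(48𝚡²)`, in which the factor `z` of `𝚡²` cancels. The remaining even powers of `z`
are removed by `z² = 2t²/(2 − t)`, and what is left is an identity of rational functions in `t`.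
-/

lemma one_div_sq_one_div_sqrt {a : ℝ} (ha : 0 ≤ a) : 1 / (1 / Real.sqrt a) ^ 2 = a := by
  rw [one_div_pow, one_div_one_div, Real.sq_sqrt ha]

lemma div_sqrt_one_sub_half_sq {t : ℝ} (ht : t < 2) :
    (t / Real.sqrt (1 - t / 2)) ^ 2 = 2 * t ^ 2 / (2 - t) := by
  have hpos : 0 < 1 - t / 2 := by linarith
  rw [div_pow, Real.sq_sqrt hpos.le]
  field_simp

lemma contact_term_eq_inv_sq_mass {m Λ u3 t xSq : ℝ} (hm : m ≠ 0)
    (hΛ : Λ = 1 / m ^ 3) (hu3 : u3 = -m ^ 2 * (2 * t - t ^ 2 / 4) - (3 / 8) * m * Λ) :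
    1 / (48 * m ^ 2 * xSq) - (u3 + Λ ^ 2 / 64) / (6 * m ^ 2) - 3 * Λ / (16 * m)
      = (1 / m ^ 2) / (48 * xSq) + (2 * t - t ^ 2 / 4) / 6
        - (1 / m ^ 2) ^ 2 / 8 - (1 / m ^ 2) ^ 4 / 384 := by
  subst hΛ hu3
  field_simp
  ring

lemma contact_term_at_monopole_eq {t z : ℝ} (hz : z ≠ 0) (ht : 2 - t ≠ 0)
    (hz_sq : z ^ 2 = 2 * t ^ 2 / (2 - t)) :
    2 * z / (48 * (z * (2 - t) ^ 2 / ((2 + t) ^ 2 * t * (4 - t)))) + (2 * t - t ^ 2 / 4) / 6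
        - (2 * z) ^ 2 / 8 - (2 * z) ^ 4 / 384
      = (1 / 2) * t * (1 - t / 2) := by
  rw [mul_pow, mul_pow, show z ^ 4 = (z ^ 2) ^ 2 by ring, hz_sq]
  field_simp
  ring

theorem stmt_9 (t z m Λ u3 xSq : ℝ) (ht0 : 0 < t) (ht2 : t < 2)
    (hz : z = t / Real.sqrt (1 - t/2))
    (hm : m = 1 / Real.sqrt (2*z))
    (hΛ : Λ = 1 / m^3)
    (hu3 : u3 = -m^2 * (2*t - t^2/4) - (3/8)*m*Λ)
    (hxSq : xSq = z*(2 - t)^2/((2 + t)^2*t*(4 - t))) :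
    1/(48*m^2*xSq) - (u3 + Λ^2/64)/(6*m^2) - 3*Λ/(16*m)
      = (1/2)*t*(1 - t/2) := by
  have hz0 : 0 < z := hz ▸ div_pos ht0 (Real.sqrt_pos.2 (by linarith))
  have hm0 : m ≠ 0 := by rw [hm]; positivity
  have hinv : 1 / m ^ 2 = 2 * z := hm ▸ one_div_sq_one_div_sqrt (by positivity)
  rw [contact_term_eq_inv_sq_mass hm0 hΛ hu3, hinv, hxSq]
  exact contact_term_at_monopole_eq hz0.ne' (by linarith) (hz ▸ div_sqrt_one_sub_half_sq ht2)
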